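/- arXiv:2010.04780 — 2 statements merged into one kernel-verified Lean document; each statement's English description precedes it below -/
import Mathlib

section
/- With the same setup, setting Ω₁(X,Y) = Tr(ψ_j(S)(X,Y)∘j) and Ω₂(X,Y) = Ω₁(jX,jY) - Ω₁(X,Y), one has Ω₂(X,Y) = -8(n+1)·S(X,jY) for all X, Y ∈ V. -/
/-!
Substituting `jZ` for `Z` in the defining identity of `ψ` expresses `g (ψ(X,Y)(jZ)) W` through
`g`, `S` and rank-one forms; taking traces relative to `g` gives
`Ω₁(X,Y) = 4(n+1) S(X,jY) - 2 g(X,jY) tr_g S`. The coefficient `g(X,jY)` of the unknown trace of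
`S` is invariant under `(X,Y) ↦ (jX,jY)`, while `S(X,jY)` changes sign, so this term cancels in
`Ω₂`, leaving `-8(n+1) S(X,jY)`.
-/

namespace LinearMap.BilinForm

variable {K V : Type*} [Field K] [AddCommGroup V] [Module K V] [FiniteDimensional K V]
  {B : LinearMap.BilinForm K V} (hB : B.Nondegenerate)

variable (B) in
/-- The trace of the endomorphism `A` with `B (A x) y = T x y`. -/
noncomputable def traceWrt : LinearMap.BilinForm K V →ₗ[K] K :=
  trace K V ∘ₗ llcomp K V (Module.Dual K V) V (B.toDual hB).symm.toLinearMap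

include hB in
lemma trace_eq_traceWrt {A : V →ₗ[K] V} {T : LinearMap.BilinForm K V}
    (h : ∀ x y, B (A x) y = T x y) :
    trace K V A = B.traceWrt hB T := by
  have hA : A = (B.toDual hB).symm.toLinearMap ∘ₗ T := by
    ext x
    refine LinearMap.ker_eq_bot.mp hB.ker_eq_bot (LinearMap.ext fun y => ?_)
    simp [h]
  rw [hA]
  rfl

lemma traceWrt_self : B.traceWrt hB B = Module.finrank K V := by
  rw [← trace_eq_traceWrt hB (A := LinearMap.id) fun _ _ => rfl, trace_id]

lemma traceWrt_smulRight (u v : Module.Dual K V) :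
    B.traceWrt hB (u.smulRight v) = u ((B.toDual hB).symm v) := by
  rw [← trace_eq_traceWrt hB (A := u.smulRight ((B.toDual hB).symm v)) fun x y => by simp,
    trace_smulRight]

lemma traceWrt_smulRight_apply_right (u : Module.Dual K V) (b : V) :
    B.traceWrt hB (u.smulRight (B b)) = u b := by
  rw [traceWrt_smulRight]
  exact congrArg u ((B.toDual hB).symm_apply_apply b)

lemma traceWrt_apply_smulRight (hs : B.IsSymm) (a : V) (v : Module.Dual K V) :
    B.traceWrt hB ((B a).smulRight v) = v a := by
  rw [traceWrt_smulRight, hs.eq, apply_toDual_symm_apply]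

end LinearMap.BilinForm

section ComplexStructure

variable {R M : Type*} [CommRing R] [AddCommGroup M] [Module R M] {j : M →ₗ[R] M}

lemma apply_apply_eq_neg_of_comp_self (hj : j ∘ₗ j = -LinearMap.id) (x : M) :
    j (j x) = -x := by
  simpa using LinearMap.congr_fun hj x

lemma apply_left_eq_neg_apply_right (hj : j ∘ₗ j = -LinearMap.id)
    {B : M →ₗ[R] M →ₗ[R] R} (hB : ∀ x y, B (j x) (j y) = B x y) (x y : M) :
    B (j x) y = -B x (j y) :=
  calc B (j x) y = -B (j x) (j (j y)) := by
        rw [apply_apply_eq_neg_of_comp_self hj, map_neg, neg_neg]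
    _ = -B x (j y) := by rw [hB]

lemma apply_left_eq_apply_right (hj : j ∘ₗ j = -LinearMap.id)
    {B : M →ₗ[R] M →ₗ[R] R} (hB : ∀ x y, B (j x) (j y) = -B x y) (x y : M) :
    B (j x) y = B x (j y) :=
  calc B (j x) y = -B (j x) (j (j y)) := by
        rw [apply_apply_eq_neg_of_comp_self hj, map_neg, neg_neg]
    _ = B x (j y) := by rw [hB, neg_neg]

end ComplexStructure

open LinearMap BilinForm in
theorem trace_psi_comp_j
    {K V : Type*} [Field K] [AddCommGroup V] [Module K V] [FiniteDimensional K V]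
    {g : LinearMap.BilinForm K V} (hg : g.Nondegenerate) (hgs : g.IsSymm)
    {j : V →ₗ[K] V} (hj : j ∘ₗ j = -LinearMap.id) (hcompat : ∀ X Y, g (j X) (j Y) = g X Y)
    {S : LinearMap.BilinForm K V} (hSanti : ∀ X Y, S X Y = -S Y X)
    (hSj : ∀ X Y, S (j X) (j Y) = -S X Y)
    {ψ : V → V → (V →ₗ[K] V)}
    (hψ : ∀ X Y Z W : V, g (ψ X Y Z) W
      = 2 * g X (j Y) * S Z (j W) + 2 * g Z (j W) * S X (j Y)
        + g X (j Z) * S Y (j W) + g Y (j W) * S X (j Z)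
        - g X (j W) * S Y (j Z) - g Y (j Z) * S X (j W)) (X Y : V) :
    trace K V (ψ X Y ∘ₗ j)
      = (2 * Module.finrank K V + 4) * S X (j Y) - 2 * g X (j Y) * g.traceWrt hg S := by
  have hjj := apply_apply_eq_neg_of_comp_self hj
  have hgj := apply_left_eq_neg_apply_right hj hcompat
  have hSj' := apply_left_eq_apply_right hj hSj
  have hSYX : S Y (j X) = -S X (j Y) := by rw [hSanti, hSj']
  -- `T` is `g (ψ X Y (j Z)) W` expanded, with `j (j Z) = -Z`, as a form in `(Z, W)`
  rw [trace_eq_traceWrt hg (T := -(2 * g X (j Y)) • S + (2 * S X (j Y)) • g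
      + (S X).smulRight (g (j Y)) + (g Y).smulRight (S X ∘ₗ j)
      + (g (-X)).smulRight (S Y ∘ₗ j) + (S (-Y)).smulRight (g (j X))) fun Z W => ?_]
  · simp only [map_add, map_smul, traceWrt_self, traceWrt_smulRight_apply_right,
      traceWrt_apply_smulRight hg hgs]
    simp only [LinearMap.comp_apply, map_neg, LinearMap.neg_apply, hSYX, smul_eq_mul]
    ring
  · simp only [LinearMap.comp_apply, hψ, LinearMap.add_apply, LinearMap.smul_apply,
      smulRight_apply, smul_eq_mul, hjj, map_neg, LinearMap.neg_apply, hgj, hSj']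
    ring

/-- With `Ω₁(X,Y) = Tr(ψ_j(S)(X,Y)∘j)` and `Ω₂(X,Y) = Ω₁(jX,jY) - Ω₁(X,Y)`, one has `Ω₂(X,Y) = -8(n+1) S(X,jY)` for all `X, Y`. -/
theorem omega2_psi
    (V : Type*) [AddCommGroup V] [Module ℝ V] [FiniteDimensional ℝ V]
    (n : ℕ) (hdim : Module.finrank ℝ V = 2 * n)
    (g : V →ₗ[ℝ] V →ₗ[ℝ] ℝ)
    (hnd : ∀ X : V, (∀ Y : V, g X Y = 0) → X = 0)
    (hgsym : ∀ X Y : V, g X Y = g Y X)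
    (j : V →ₗ[ℝ] V) (hj : j ∘ₗ j = -LinearMap.id)
    (hcompat : ∀ X Y : V, g (j X) (j Y) = g X Y)
    (S : V →ₗ[ℝ] V →ₗ[ℝ] ℝ)
    (hSanti : ∀ X Y : V, S X Y = -S Y X)
    (hSj : ∀ X Y : V, S (j X) (j Y) = -S X Y)
    (ψ : V → V → (V →ₗ[ℝ] V))
    (hψ : ∀ X Y Z W : V, g (ψ X Y Z) W
      = 2 * g X (j Y) * S Z (j W) + 2 * g Z (j W) * S X (j Y)
        + g X (j Z) * S Y (j W) + g Y (j W) * S X (j Z)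
        - g X (j W) * S Y (j Z) - g Y (j Z) * S X (j W)) :
    ∀ X Y : V, LinearMap.trace ℝ V (ψ (j X) (j Y) ∘ₗ j)
        - LinearMap.trace ℝ V (ψ X Y ∘ₗ j)
      = -8 * ((n : ℝ) + 1) * S X (j Y) := by
  intro X Y
  have hg : g.Nondegenerate := ⟨hnd, fun Y hY => hnd Y fun Z => by rw [hgsym]; exact hY Z⟩
  have hgs : LinearMap.BilinForm.IsSymm g := ⟨hgsym⟩
  rw [trace_psi_comp_j hg hgs hj hcompat hSanti hSj hψ,
    trace_psi_comp_j hg hgs hj hcompat hSanti hSj hψ, hcompat, hSj, hdim]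
  push_cast
  ring
end

section
/- Let (V,Ω) be a 2n-dimensional symplectic vector space with compatible complex structure j, and let S be an antisymmetric bilinear form with S(jX,jY) = -S(X,Y). Define R(S,j)(X,Y) ∈ End(V) by Ω(R(S,j)(X,Y)Z,T) = -2Ω(Z,jT)S(X,jY) + Ω(X,jZ)S(Y,jT) + Ω(X,jT)S(Y,jZ) - Ω(Y,jT)S(X,jZ) - Ω(Y,jZ)S(X,jT). Then R(S,j) is Ricci-flat: Tr(Z ↦ R(S,j)(X,Z)Y) = 0 for all X, Y ∈ V. -/
/-!
Raising an index with `Ω`, the endomorphism `Z ↦ R(X,Z)Y` is the sum of three rank-one maps,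
with traces `-2 S(X,Y)`, `S(X,Y)` and `S(X,Y)`, and of multiples of `j` and of the map `Ŝ`
defined by `Ω(Ŝ Z, T) = S(Z, jT)`. Both of the latter are traceless: `j` is `Ω`-skew, and
`j Ŝ j = Ŝ` with `j² = -1` gives `tr Ŝ = tr (Ŝ j j) = -tr Ŝ`.
-/

section

open LinearMap (BilinForm IsAdjointPair trace)

variable {K V : Type*} [Field K] [AddCommGroup V] [Module K V]

namespace LinearMap

theorem IsOrthogonal.isSkewAdjoint {B : BilinForm K V} {j : V →ₗ[K] V} (h : B.IsOrthogonal j)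
    (hj : j ∘ₗ j = -LinearMap.id) : B.IsSkewAdjoint j := fun X Y => by
  have hjj : j (j Y) = -Y := by simpa using LinearMap.congr_fun hj Y
  simpa [hjj, neg_eq_iff_eq_neg] using h X (j Y)

end LinearMap

variable [FiniteDimensional K V]

namespace LinearMap

theorem trace_eq_zero_of_comp_comp_eq_self [CharZero K] {j g : V →ₗ[K] V}
    (hj : j ∘ₗ j = -LinearMap.id) (hg : j ∘ₗ g ∘ₗ j = g) : trace K V g = 0 := by
  have : trace K V g = -trace K V g := by
    conv_lhs => rw [← hg, trace_comp_comm', comp_assoc, hj, comp_neg, comp_id, map_neg]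
  exact self_eq_neg.mp this

namespace BilinForm

theorem nondegenerate_of_separatingLeft {B : BilinForm K V} (hB : B.SeparatingLeft) :
    B.Nondegenerate := by
  have hinj : Function.Injective B :=
    LinearMap.ker_eq_bot.mp (separatingLeft_iff_ker_eq_bot.mp hB)
  have hsurj : Function.Surjective B :=
    (injective_iff_surjective_of_finrank_eq_finrank Subspace.dual_finrank_eq.symm).mp hinj
  refine ⟨hB, fun y hy => (Module.forall_dual_apply_eq_zero_iff K y).mp fun φ => ?_⟩
  obtain ⟨x, rfl⟩ := hsurj φ
  exact hy x

theorem trace_eq_of_isAdjointPair {B : BilinForm K V} (hB : B.Nondegenerate)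
    {f g : V →ₗ[K] V} (h : IsAdjointPair B B f g) : trace K V f = trace K V g := by
  have hconj : f = (B.toDual hB).symm.conj (Module.Dual.transpose (R := K) g) := by
    ext x
    apply (B.toDual hB).injective
    ext y
    simp [LinearEquiv.conj_apply, toDual_def, Module.Dual.transpose_apply, h x y]
  rw [hconj, trace_conj', trace_transpose']

theorem trace_eq_zero_of_isSkewAdjoint [CharZero K] {B : BilinForm K V}
    (hB : B.Nondegenerate) {f : V →ₗ[K] V} (h : B.IsSkewAdjoint f) :
    trace K V f = 0 := by
  have := trace_eq_of_isAdjointPair hB (g := -f) h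
  rwa [map_neg, self_eq_neg] at this

end BilinForm

end LinearMap

section Symplectic

open LinearMap LinearMap.BilinForm

def IsRSj (Ω : BilinForm K V) (j : V →ₗ[K] V) (S : BilinForm K V)
    (R : V →ₗ[K] V →ₗ[K] V →ₗ[K] V) : Prop :=
  ∀ X Y Z T : V, Ω (R X Y Z) T
    = -2 * Ω Z (j T) * S X (j Y) + Ω X (j Z) * S Y (j T)
      + Ω X (j T) * S Y (j Z) - Ω Y (j T) * S X (j Z)
      - Ω Y (j Z) * S X (j T)

variable {Ω : BilinForm K V} (hΩ : Ω.Nondegenerate) {j : V →ₗ[K] V}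
  {S : BilinForm K V} {R : V →ₗ[K] V →ₗ[K] V →ₗ[K] V}

include hΩ in
theorem trace_symmCompOfNondegenerate_compl₂_eq_zero [CharZero K] (hj : j ∘ₗ j = -LinearMap.id)
    (hΩj : Ω.IsSkewAdjoint j) (hSj : ∀ X Y, S (j X) (j Y) = -S X Y) :
    trace K V (symmCompOfNondegenerate (S.compl₂ j) Ω hΩ) = 0 := by
  refine trace_eq_zero_of_comp_comp_eq_self hj ?_
  ext Z
  apply (Ω.toDual hΩ).injective
  ext T
  have hjj : j (j T) = -T := by simpa using LinearMap.congr_fun hj T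
  simpa [toDual_def, hΩj _ T, hjj] using hSj Z (j T)

include hΩ in
theorem IsRSj.flip_eq (hR : IsRSj Ω j S R) (hΩj : Ω.IsSkewAdjoint j) (X Y : V) :
    (R X).flip Y = (S X ∘ₗ j).smulRight ((2 : K) • j Y)
      + Ω X (j Y) • symmCompOfNondegenerate (S.compl₂ j) Ω hΩ
      + (S.flip (j Y)).smulRight (-j X) + S X (j Y) • j
      + (Ω.flip (j Y)).smulRight (-symmCompOfNondegenerate (S.compl₂ j) Ω hΩ X) := by
  ext Z
  apply (Ω.toDual hΩ).injective
  ext T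
  simp only [LinearMap.flip_apply, toDual_def, hR X Z Y T, neg_mul, LinearMap.add_apply,
    coe_smulRight, coe_comp, Function.comp_apply, LinearMap.smul_apply, BilinForm.flip_apply,
    smul_neg, map_add, map_smul, map_neg, hΩj _ T, Pi.neg_apply, smul_eq_mul, mul_neg,
    symmCompOfNondegenerate_left_apply, compl₂_apply, LinearMap.neg_apply, neg_neg]
  ring

include hΩ in
theorem IsRSj.trace_flip_eq_zero [CharZero K] (hR : IsRSj Ω j S R)
    (hj : j ∘ₗ j = -LinearMap.id) (hΩj : Ω.IsSkewAdjoint j) (hSj : ∀ X Y, S (j X) (j Y) = -S X Y)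
    (X Y : V) :
    trace K V ((R X).flip Y) = 0 := by
  have hjj (v : V) : j (j v) = -v := by simpa using LinearMap.congr_fun hj v
  rw [hR.flip_eq hΩ hΩj]
  simp only [map_add, map_smul, trace_smulRight,
    trace_symmCompOfNondegenerate_compl₂_eq_zero hΩ hj hΩj hSj,
    trace_eq_zero_of_isSkewAdjoint hΩ hΩj]
  simp only [coe_comp, Function.comp_apply, hjj, map_neg, smul_eq_mul, mul_neg, mul_zero, add_zero,
    BilinForm.flip_apply, hSj, neg_neg, symmCompOfNondegenerate_left_apply, compl₂_apply]
  ring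

end Symplectic

end

theorem symplectic_RSj_ricci_flat_general
    (V : Type*) [AddCommGroup V] [Module ℝ V] [FiniteDimensional ℝ V]
    (Ω : V →ₗ[ℝ] V →ₗ[ℝ] ℝ)
    (hnd : ∀ X : V, (∀ Y : V, Ω X Y = 0) → X = 0)
    (j : V →ₗ[ℝ] V) (hj : j ∘ₗ j = -LinearMap.id)
    (hcompat : ∀ X Y : V, Ω (j X) (j Y) = Ω X Y)
    (S : V →ₗ[ℝ] V →ₗ[ℝ] ℝ)
    (hSj : ∀ X Y : V, S (j X) (j Y) = -S X Y)
    (R : V →ₗ[ℝ] V →ₗ[ℝ] V →ₗ[ℝ] V)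
    (hR : ∀ X Y Z T : V, Ω (R X Y Z) T
      = -2 * Ω Z (j T) * S X (j Y) + Ω X (j Z) * S Y (j T)
        + Ω X (j T) * S Y (j Z) - Ω Y (j T) * S X (j Z)
        - Ω Y (j Z) * S X (j T)) :
    ∀ X Y : V, LinearMap.trace ℝ V ((R X).flip Y) = 0 :=
  IsRSj.trace_flip_eq_zero (LinearMap.BilinForm.nondegenerate_of_separatingLeft hnd) hR hj
    (LinearMap.IsOrthogonal.isSkewAdjoint hcompat hj) hSj

/-- The symplectic Weyl-type tensor `R(S,j)` built from an
antisymmetric bilinear form `S` with `S(jX,jY) = -S(X,Y)` is Ricci-flat: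
`Tr(Z ↦ R(S,j)(X,Z)Y) = 0` for all `X, Y`. -/
theorem symplectic_RSj_ricci_flat
    (V : Type*) [AddCommGroup V] [Module ℝ V] [FiniteDimensional ℝ V]
    (n : ℕ) (hdim : Module.finrank ℝ V = 2 * n)
    (Ω : V →ₗ[ℝ] V →ₗ[ℝ] ℝ)
    (hnd : ∀ X : V, (∀ Y : V, Ω X Y = 0) → X = 0)
    (hΩanti : ∀ X Y : V, Ω X Y = -Ω Y X)
    (j : V →ₗ[ℝ] V) (hj : j ∘ₗ j = -LinearMap.id)
    (hcompat : ∀ X Y : V, Ω (j X) (j Y) = Ω X Y)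
    (S : V →ₗ[ℝ] V →ₗ[ℝ] ℝ)
    (hSanti : ∀ X Y : V, S X Y = -S Y X)
    (hSj : ∀ X Y : V, S (j X) (j Y) = -S X Y)
    (R : V →ₗ[ℝ] V →ₗ[ℝ] V →ₗ[ℝ] V)
    (hR : ∀ X Y Z T : V, Ω (R X Y Z) T
      = -2 * Ω Z (j T) * S X (j Y) + Ω X (j Z) * S Y (j T)
        + Ω X (j T) * S Y (j Z) - Ω Y (j T) * S X (j Z)
        - Ω Y (j Z) * S X (j T)) :
    ∀ X Y : V, LinearMap.trace ℝ V ((R X).flip Y) = 0 :=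
  symplectic_RSj_ricci_flat_general V Ω hnd j hj hcompat S hSj R hR
end
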